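/- arXiv:2409.19596 — 2 statements merged into one kernel-verified Lean document; each statement's English description precedes it below -/
import Mathlib

section
/- Let V be a real inner product space of finite dimension m ≥ 1 with inner product g0 = ⟨·,·⟩, let ω be a linear functional on V and Λ ∈ ℝ. Consider the symmetric bilinear form g on V × ℝ defined by g((v,s),(w,t)) = ⟨v,w⟩ + ω(v)t + ω(w)s − Λ s t. Then g is a Lorentzian scalar product (i.e. nondegenerate of index 1, equivalently of signature (m,1)) if and only if Λ + ‖ω‖² > 0, where ‖ω‖ is the operator norm of ω with respect to ⟨·,·⟩. -/
open scoped RealInnerProductSpace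

/-- The symmetric bilinear form
`g((v,s),(w,t)) = ⟨v,w⟩ + ω(v)t + ω(w)s − Λst` on `V × ℝ` is a Lorentzian scalar
product (nondegenerate of index 1) if and only if `Λ + ‖ω‖² > 0`. -/
theorem lorentzian_iff_lambda_add_norm_sq_pos
    {V : Type*} [NormedAddCommGroup V] [InnerProductSpace ℝ V] [FiniteDimensional ℝ V]
    (hm : 1 ≤ Module.finrank ℝ V)
    (ω : V →L[ℝ] ℝ) (Λ : ℝ)
    (g : V × ℝ → V × ℝ → ℝ)
    (hg : ∀ p q : V × ℝ,
      g p q = ⟪p.1, q.1⟫ + ω p.1 * q.2 + ω q.1 * p.2 - Λ * p.2 * q.2) :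
    ((∀ p : V × ℝ, (∀ q : V × ℝ, g p q = 0) → p = 0) ∧
     (∃ W : Submodule ℝ (V × ℝ),
        Module.finrank ℝ W = 1 ∧ ∀ p ∈ W, p ≠ 0 → g p p < 0) ∧
     (∀ W : Submodule ℝ (V × ℝ),
        (∀ p ∈ W, p ≠ 0 → g p p < 0) → Module.finrank ℝ W ≤ 1)) ↔
    0 < Λ + ‖ω‖ ^ 2 := by
  classical
  set u : V := (InnerProductSpace.toDual ℝ V).symm ω with hu_def
  have hu : ∀ v : V, ω v = ⟪u, v⟫ := fun v =>
    (InnerProductSpace.toDual_symm_apply).symm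
  have hnorm : ‖u‖ = ‖ω‖ := LinearIsometryEquiv.norm_map _ ω
  have huu : ⟪u, u⟫ = ‖ω‖ ^ 2 := by
    rw [real_inner_self_eq_norm_sq, hnorm]
  set c : ℝ := Λ + ‖ω‖ ^ 2 with hc_def
  have hkey : ∀ p q : V × ℝ,
      g p q = ⟪p.1 + p.2 • u, q.1 + q.2 • u⟫ - c * (p.2 * q.2) := by
    intro p q
    rw [hg, hu p.1, hu q.1, hc_def, ← huu]
    simp only [inner_add_left, inner_add_right, real_inner_smul_left,
      real_inner_smul_right]
    rw [real_inner_comm p.1 u]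
    ring
  have hquad : ∀ p : V × ℝ, g p p = ‖p.1 + p.2 • u‖ ^ 2 - c * (p.2 * p.2) := by
    intro p
    rw [hkey p p, real_inner_self_eq_norm_sq]
  constructor
  · rintro ⟨hnd, ⟨W, hW1, hWneg⟩, _⟩
    by_contra hle
    push_neg at hle
    rcases lt_or_eq_of_le hle with hlt | heq
    · -- c < 0 : g is positive semidefinite, contradicting the negative subspace
      have hWne : W ≠ ⊥ := by
        intro h
        rw [h, finrank_bot] at hW1
        exact zero_ne_one hW1
      obtain ⟨x, hxW, hx0⟩ := Submodule.exists_mem_ne_zero_of_ne_bot hWne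
      have hneg := hWneg x hxW hx0
      have hge : (0:ℝ) ≤ g x x := by
        rw [hquad x]
        nlinarith [sq_nonneg ‖x.1 + x.2 • u‖, sq_nonneg x.2]
      linarith
    · -- c = 0 : (-u, 1) is a nonzero null direction, contradicting nondegeneracy
      have hnull : ∀ q : V × ℝ, g ((-u, 1) : V × ℝ) q = 0 := by
        intro q
        rw [hkey, heq]
        simp
      have := hnd (-u, 1) hnull
      have : (1:ℝ) = 0 := congrArg Prod.snd this
      norm_num at this
  · intro hc
    refine ⟨?_, ⟨?_, ?_⟩⟩
    · -- nondegenerate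
      intro p hp
      have h1 := hp (p.1 + p.2 • u, 0)
      rw [hkey] at h1
      simp only [mul_zero, zero_smul, add_zero, sub_zero] at h1
      have hz : p.1 + p.2 • u = 0 := by
        rwa [inner_self_eq_zero] at h1
      have h2 := hp (0, 1)
      rw [hkey] at h2
      simp only [hz, inner_zero_left, mul_one, zero_sub, neg_eq_zero] at h2
      have hp2 : p.2 = 0 := by
        rcases mul_eq_zero.mp h2 with h | h
        · exact absurd h (ne_of_gt hc)
        · exact h
      have hp1 : p.1 = 0 := by
        rw [hp2, zero_smul, add_zero] at hz
        exact hz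
      exact Prod.ext hp1 hp2
    · -- one-dimensional negative subspace: span of (-u, 1)
      have hp0 : ((-u, 1) : V × ℝ) ≠ 0 := by
        intro h
        have : (1:ℝ) = 0 := congrArg Prod.snd h
        norm_num at this
      refine ⟨Submodule.span ℝ {((-u, 1) : V × ℝ)}, finrank_span_singleton hp0, ?_⟩
      intro p hpW hp0'
      obtain ⟨a, ha⟩ := Submodule.mem_span_singleton.mp hpW
      have ha0 : a ≠ 0 := by
        intro h
        rw [h, zero_smul] at ha
        exact hp0' ha.symm
      have hp1 : p.1 = a • (-u) := by rw [← ha]; rfl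
      have hp2 : p.2 = a := by
        have := congrArg Prod.snd ha
        simpa using this.symm
      rw [hquad, hp1, hp2]
      have : a • (-u) + a • u = 0 := by
        rw [smul_neg, neg_add_cancel]
      rw [this]
      simp only [norm_zero, ne_eq, OfNat.ofNat_ne_zero, not_false_eq_true,
        zero_pow, zero_sub, neg_neg]
      have haa : 0 < a * a := mul_self_pos.mpr ha0
      nlinarith
    · -- maximality: index ≤ 1
      intro W hWneg
      set P : Submodule ℝ (V × ℝ) := LinearMap.range (LinearMap.inl ℝ V ℝ) with hP_def
      have hPrank : Module.finrank ℝ P = Module.finrank ℝ V :=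
        LinearMap.finrank_range_of_inj LinearMap.inl_injective
      have hinf : W ⊓ P = ⊥ := by
        rw [Submodule.eq_bot_iff]
        rintro x ⟨hxW, hxP⟩
        obtain ⟨v, hv⟩ := hxP
        by_contra hx0
        have hneg := hWneg x hxW hx0
        have hx2 : x.2 = 0 := by
          have := congrArg Prod.snd hv
          simpa using this.symm
        rw [hquad, hx2] at hneg
        simp at hneg
        exact absurd hneg (not_lt.mpr (sq_nonneg _))
      have hsum := Submodule.finrank_sup_add_finrank_inf_eq W P
      rw [hinf, finrank_bot, add_zero] at hsum
      have hle : Module.finrank ℝ (W ⊔ P : Submodule ℝ (V × ℝ)) ≤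
          Module.finrank ℝ (V × ℝ) := Submodule.finrank_le _
      have htot : Module.finrank ℝ (V × ℝ) = Module.finrank ℝ V + 1 := by
        rw [Module.finrank_prod, Module.finrank_self]
      omega
end

section
/- Let V be a real inner product space of finite dimension m ≥ 1, ω a linear functional on V, and Λ ≥ 0 with Λ + ‖ω‖² > 0. For v ∈ V the lightlike condition ⟨v,v⟩ + 2ω(v) − Λ = 0 holds if and only if: (a) in case Λ > 0, R(v) = 1, where R(v) = (1/Λ)(ω(v) + √(Λ⟨v,v⟩ + ω(v)²)); (b) in case Λ = 0 and v ≠ 0, ω(v) < 0 and K(v) = 1, where K(v) = −⟨v,v⟩/(2ω(v)). -/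
open scoped RealInnerProductSpace

/-- Pointwise characterization of lightlike vectors:
`⟨v,v⟩ + 2ω(v) − Λ = 0` holds iff (a) when `Λ > 0`, `R(v) = 1` with
`R(v) = (1/Λ)(ω(v) + √(Λ⟨v,v⟩ + ω(v)²))`; (b) when `Λ = 0` and `v ≠ 0`,
`ω(v) < 0` and `K(v) = 1` with `K(v) = −⟨v,v⟩/(2ω(v))`. -/
theorem lightlike_iff_randers_kropina_norm_one
    {V : Type*} [NormedAddCommGroup V] [InnerProductSpace ℝ V] [FiniteDimensional ℝ V]
    (hm : 1 ≤ Module.finrank ℝ V)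
    (ω : V →L[ℝ] ℝ) (Λ : ℝ) (hΛ : 0 ≤ Λ) (hpos : 0 < Λ + ‖ω‖ ^ 2) (v : V) :
    (0 < Λ →
      ((⟪v, v⟫ + 2 * ω v - Λ = 0) ↔
        (1 / Λ) * (ω v + Real.sqrt (Λ * ⟪v, v⟫ + (ω v) ^ 2)) = 1)) ∧
    ((Λ = 0 ∧ v ≠ 0) →
      ((⟪v, v⟫ + 2 * ω v - Λ = 0) ↔
        (ω v < 0 ∧ -⟪v, v⟫ / (2 * ω v) = 1))) := by
  have hself : (0:ℝ) ≤ ⟪v, v⟫ := real_inner_self_nonneg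
  constructor
  · intro hL
    constructor
    · intro h
      have hvv : ⟪v, v⟫ = Λ - 2 * ω v := by linarith
      have hΛω : 0 ≤ Λ - ω v := by nlinarith [sq_nonneg (ω v)]
      have harg : Λ * ⟪v, v⟫ + (ω v) ^ 2 = (Λ - ω v) ^ 2 := by
        rw [hvv]; ring
      rw [harg, Real.sqrt_sq hΛω]
      field_simp
      ring
    · intro h
      have hs : Real.sqrt (Λ * ⟪v, v⟫ + (ω v) ^ 2) = Λ - ω v := by
        have := h
        field_simp at this
        linarith
      have hnn : 0 ≤ Λ * ⟪v, v⟫ + (ω v) ^ 2 := by positivity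
      have hsq : Λ * ⟪v, v⟫ + (ω v) ^ 2 = (Λ - ω v) ^ 2 := by
        rw [← hs, Real.sq_sqrt hnn]
      nlinarith
  · rintro ⟨hΛ0, hv⟩
    have hvpos : (0:ℝ) < ⟪v, v⟫ := lt_of_le_of_ne hself (Ne.symm (inner_self_ne_zero.2 hv))
    subst hΛ0
    constructor
    · intro h
      have hω : ω v = -⟪v, v⟫ / 2 := by linarith
      have hωneg : ω v < 0 := by rw [hω]; linarith
      refine ⟨hωneg, ?_⟩
      rw [hω]
      field_simp
    · rintro ⟨hωneg, h⟩
      have h2 : -⟪v, v⟫ = 2 * ω v := by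
        have hne : 2 * ω v ≠ 0 := by linarith
        rw [div_eq_iff hne] at h
        linarith
      linarith
end
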